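/- arXiv:1607.05364 — 4 statements merged into one kernel-verified Lean document; each statement's English description precedes it below -/
import Mathlib

section
/- Let α : I → ℝ³ be a C² regular curve in Minkowski space parametrized by arc-length with (t,t) = ε = ±1, equipped with a Bishop frame {t, n₁, n₂} where (n₁,n₁) = ε₁ = ±1, (n₂,n₂) = 1, and nᵢ' = −ε κᵢ t, t' = ε₁ κ₁ n₁ + κ₂ n₂. If α lies on the sphere {x : (x−P, x−P) = ρ} for some constant ρ ≠ 0 and point P, then there exist constants a₁, a₂ such that 1 + ε a₁ κ₁(s) + ε a₂ κ₂(s) = 0 for all s, and ε₁ a₁² + a₂² = ρ. -/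
noncomputable section

/-- The Minkowski bilinear form on ℝ³. -/
def mink (x y : Fin 3 → ℝ) : ℝ := x 0 * y 0 + x 1 * y 1 - x 2 * y 2

lemma mink_hasDeriv {F G : ℝ → Fin 3 → ℝ} {F' G' : Fin 3 → ℝ} {s : ℝ}
    (hF : HasDerivAt F F' s) (hG : HasDerivAt G G' s) :
    HasDerivAt (fun s => mink (F s) (G s)) (mink F' (G s) + mink (F s) G') s := by
  have hFi := hasDerivAt_pi.1 hF
  have hGi := hasDerivAt_pi.1 hG
  have h := (((hFi 0).mul (hGi 0)).add ((hFi 1).mul (hGi 1))).sub ((hFi 2).mul (hGi 2))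
  have hval : mink F' (G s) + mink (F s) G'
      = F' 0 * G s 0 + F s 0 * G' 0 + (F' 1 * G s 1 + F s 1 * G' 1)
        - (F' 2 * G s 2 + F s 2 * G' 2) := by simp [mink]; ring
  rw [hval]
  exact h

/-- If a non-lightlike curve with a Bishop frame lies on a sphere `{x : (x−P,x−P) = ρ}` of
nonzero radius, then its normal development lies on a line not through the origin, with
`ε₁a₁² + a₂² = ρ`. -/
theorem spherical_curve_normal_development_line
    (α t n₁ n₂ : ℝ → Fin 3 → ℝ) (κ₁ κ₂ : ℝ → ℝ) (ε ε₁ : ℝ)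
    (hε : ε = 1 ∨ ε = -1) (hε₁ : ε₁ = 1 ∨ ε₁ = -1)
    (hαt : ∀ s, HasDerivAt α (t s) s)
    (htt : ∀ s, mink (t s) (t s) = ε)
    (hn₁n₁ : ∀ s, mink (n₁ s) (n₁ s) = ε₁)
    (hn₂n₂ : ∀ s, mink (n₂ s) (n₂ s) = 1)
    (htn₁ : ∀ s, mink (t s) (n₁ s) = 0)
    (htn₂ : ∀ s, mink (t s) (n₂ s) = 0)
    (hn₁n₂ : ∀ s, mink (n₁ s) (n₂ s) = 0)
    (ht' : ∀ s, HasDerivAt t ((ε₁ * κ₁ s) • n₁ s + κ₂ s • n₂ s) s)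
    (hn₁' : ∀ s, HasDerivAt n₁ ((-(ε * κ₁ s)) • t s) s)
    (hn₂' : ∀ s, HasDerivAt n₂ ((-(ε * κ₂ s)) • t s) s)
    (P : Fin 3 → ℝ) (ρ : ℝ) (hρ : ρ ≠ 0)
    (hsph : ∀ s, mink (α s - P) (α s - P) = ρ) :
    ∃ a₁ a₂ : ℝ, (∀ s, 1 + ε * a₁ * κ₁ s + ε * a₂ * κ₂ s = 0) ∧
      ε₁ * a₁ ^ 2 + a₂ ^ 2 = ρ := by
  have hεsq : ε * ε = 1 := by rcases hε with h | h <;> rw [h] <;> norm_num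
  have hε₁sq : ε₁ * ε₁ = 1 := by rcases hε₁ with h | h <;> rw [h] <;> norm_num
  have hx : ∀ s, HasDerivAt (fun s => α s - P) (t s) s := fun s => (hαt s).sub_const P
  -- the tangential component of α - P vanishes
  have hg0 : ∀ s, mink (α s - P) (t s) = 0 := by
    intro s
    have h := mink_hasDeriv (hx s) (hx s)
    have hconst : (fun s => mink (α s - P) (α s - P)) = fun _ => ρ := funext hsph
    rw [hconst] at h
    have h2 := h.unique (hasDerivAt_const s ρ)
    have hsymm : mink (t s) (α s - P) = mink (α s - P) (t s) := by simp [mink]; ring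
    rw [hsymm] at h2
    linarith
  -- the normal components are constant
  have hf₁d : ∀ s, HasDerivAt (fun s => mink (α s - P) (n₁ s)) 0 s := by
    intro s
    have h := mink_hasDeriv (hx s) (hn₁' s)
    convert h using 1
    have h1 : mink (α s - P) ((-(ε * κ₁ s)) • t s)
        = (-(ε * κ₁ s)) * mink (α s - P) (t s) := by simp [mink]; ring
    rw [htn₁ s, h1, hg0 s]; ring
  have hf₂d : ∀ s, HasDerivAt (fun s => mink (α s - P) (n₂ s)) 0 s := by
    intro s
    have h := mink_hasDeriv (hx s) (hn₂' s)
    convert h using 1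
    have h1 : mink (α s - P) ((-(ε * κ₂ s)) • t s)
        = (-(ε * κ₂ s)) * mink (α s - P) (t s) := by simp [mink]; ring
    rw [htn₂ s, h1, hg0 s]; ring
  set c₁ : ℝ := mink (α 0 - P) (n₁ 0) with hc₁
  set c₂ : ℝ := mink (α 0 - P) (n₂ 0) with hc₂
  have hf₁c : ∀ s, mink (α s - P) (n₁ s) = c₁ := by
    intro s
    exact is_const_of_deriv_eq_zero (fun u => (hf₁d u).differentiableAt)
      (fun u => (hf₁d u).deriv) s 0
  have hf₂c : ∀ s, mink (α s - P) (n₂ s) = c₂ := by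
    intro s
    exact is_const_of_deriv_eq_zero (fun u => (hf₂d u).differentiableAt)
      (fun u => (hf₂d u).deriv) s 0
  -- differentiating the tangential component
  have hline : ∀ s, ε + ε₁ * κ₁ s * c₁ + κ₂ s * c₂ = 0 := by
    intro s
    have h := mink_hasDeriv (hx s) (ht' s)
    have hconst : (fun s => mink (α s - P) (t s)) = fun _ => (0 : ℝ) := funext hg0
    rw [hconst] at h
    have h2 := h.unique (hasDerivAt_const s 0)
    have hexp : mink (α s - P) ((ε₁ * κ₁ s) • n₁ s + κ₂ s • n₂ s)
        = (ε₁ * κ₁ s) * mink (α s - P) (n₁ s) + κ₂ s * mink (α s - P) (n₂ s) := by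
      simp [mink]; ring
    rw [hexp, hf₁c s, hf₂c s, htt s] at h2
    linarith
  -- the radius identity at s = 0, via a frame-basis argument
  have hkey : ε₁ * c₁ ^ 2 + c₂ ^ 2 = ρ := by
    set u := t 0 with hu
    set v := n₁ 0 with hv
    set w := n₂ 0 with hw
    set X := α 0 - P with hX
    have huu : u 0 * u 0 + u 1 * u 1 - u 2 * u 2 = ε := htt 0
    have hvv : v 0 * v 0 + v 1 * v 1 - v 2 * v 2 = ε₁ := hn₁n₁ 0
    have hww : w 0 * w 0 + w 1 * w 1 - w 2 * w 2 = 1 := hn₂n₂ 0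
    have huv : u 0 * v 0 + u 1 * v 1 - u 2 * v 2 = 0 := htn₁ 0
    have huw : u 0 * w 0 + u 1 * w 1 - u 2 * w 2 = 0 := htn₂ 0
    have hvw : v 0 * w 0 + v 1 * w 1 - v 2 * w 2 = 0 := hn₁n₂ 0
    have hXu : X 0 * u 0 + X 1 * u 1 - X 2 * u 2 = 0 := hg0 0
    have hXv : X 0 * v 0 + X 1 * v 1 - X 2 * v 2 = c₁ := hf₁c 0
    have hXw : X 0 * w 0 + X 1 * w 1 - X 2 * w 2 = c₂ := hf₂c 0
    have hXX : X 0 * X 0 + X 1 * X 1 - X 2 * X 2 = ρ := hsph 0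
    set N : Matrix (Fin 3) (Fin 3) ℝ :=
      Matrix.of ![![u 0, u 1, -u 2], ![v 0, v 1, -v 2], ![w 0, w 1, -w 2]] with hN
    have hD : N.det = u 0 * (v 1 * (-w 2)) + u 1 * ((-v 2) * w 0) + (-u 2) * (v 0 * w 1)
        - (-u 2) * (v 1 * w 0) - u 1 * (v 0 * (-w 2)) - u 0 * ((-v 2) * w 1) := by
      rw [hN, Matrix.det_fin_three]
      simp [Matrix.of_apply]
      ring
    -- (det N)² = -ε·ε₁ via the Gram determinant identity
    have hsq : N.det * N.det = -(ε * ε₁) := by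
      have hid : -(N.det * N.det) =
          (u 0*u 0+u 1*u 1-u 2*u 2) * ((v 0*v 0+v 1*v 1-v 2*v 2)*(w 0*w 0+w 1*w 1-w 2*w 2)
            - (v 0*w 0+v 1*w 1-v 2*w 2)*(v 0*w 0+v 1*w 1-v 2*w 2))
          - (u 0*v 0+u 1*v 1-u 2*v 2) * ((u 0*v 0+u 1*v 1-u 2*v 2)*(w 0*w 0+w 1*w 1-w 2*w 2)
            - (v 0*w 0+v 1*w 1-v 2*w 2)*(u 0*w 0+u 1*w 1-u 2*w 2))
          + (u 0*w 0+u 1*w 1-u 2*w 2) * ((u 0*v 0+u 1*v 1-u 2*v 2)*(v 0*w 0+v 1*w 1-v 2*w 2)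
            - (v 0*v 0+v 1*v 1-v 2*v 2)*(u 0*w 0+u 1*w 1-u 2*w 2)) := by
        rw [hD]; ring
      rw [huu, hvv, hww, huv, huw, hvw] at hid
      linear_combination -hid
    have hdet : N.det ≠ 0 := by
      have h4 : ε * ε₁ = 1 ∨ ε * ε₁ = -1 := by
        rcases hε with h | h <;> rcases hε₁ with h1 | h1 <;> rw [h, h1] <;> norm_num
      rcases h4 with h | h
      · rw [h] at hsq
        intro h0
        rw [h0] at hsq
        norm_num at hsq
      · rw [h] at hsq
        intro h0
        rw [h0] at hsq
        norm_num at hsq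
    set y : Fin 3 → ℝ := fun i => X i - (ε₁ * c₁) * v i - c₂ * w i with hy
    have hMy : N.mulVec y = 0 := by
      have hy0' : y 0 = X 0 - (ε₁ * c₁) * v 0 - c₂ * w 0 := rfl
      have hy1' : y 1 = X 1 - (ε₁ * c₁) * v 1 - c₂ * w 1 := rfl
      have hy2' : y 2 = X 2 - (ε₁ * c₁) * v 2 - c₂ * w 2 := rfl
      ext i
      fin_cases i <;>
        simp [hN, Matrix.mulVec, dotProduct, Fin.sum_univ_three, hy0', hy1', hy2']
      · linear_combination hXu - (ε₁*c₁)*huv - c₂*huw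
      · linear_combination hXv - (ε₁*c₁)*hvv - c₂*hvw - c₁*hε₁sq
      · linear_combination hXw - (ε₁*c₁)*hvw - c₂*hww
    have hy0 : y = 0 := Matrix.eq_zero_of_mulVec_eq_zero hdet hMy
    have h0 : ∀ i, X i = (ε₁ * c₁) * v i + c₂ * w i := by
      intro i
      have h := congrFun hy0 i
      simp only [hy, Pi.zero_apply] at h
      linarith
    rw [h0 0, h0 1, h0 2] at hXX
    linear_combination hXX - (ε₁*ε₁*c₁^2)*hvv - (2*ε₁*c₁*c₂)*hvw - c₂^2*hww - (ε₁*c₁^2)*hε₁sq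
  refine ⟨ε₁ * c₁, c₂, fun s => ?_, ?_⟩
  · have H := hline s
    linear_combination ε * H - hεsq
  · linear_combination (ε₁ * c₁ ^ 2) * hε₁sq + hkey
end
end

section
/- Let α : I → ℝ³ be a C² regular non-lightlike curve in Minkowski space with Bishop frame {t, n₁, n₂} (frame equations t' = ε₁κ₁n₁ + κ₂n₂, nᵢ' = −εκᵢ t, ε = (t,t), ε₁ = (n₁,n₁)). If there exist constants a₁, a₂ with 1 + ε a₁ κ₁(s) + ε a₂ κ₂(s) = 0 for all s, then the point P(s) = α(s) − a₁ n₁(s) − a₂ n₂(s) is constant, and α lies on the sphere {x : (x−P, x−P) = ε₁ a₁² + a₂²}. -/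
noncomputable section

/-!
Differentiating `P = α − a₁n₁ − a₂n₂` with the Bishop equations gives
`P' = (1 + εa₁κ₁ + εa₂κ₂) t`, which vanishes by the line condition, so `P` is constant.
Then `α − P = a₁n₁ + a₂n₂`, whose Minkowski square is `ε₁a₁² + a₂²` by orthonormality of `n₁, n₂`.
-/

theorem mink_smul_add_smul_self (a₁ a₂ : ℝ) (u v : Fin 3 → ℝ) :
    mink (a₁ • u + a₂ • v) (a₁ • u + a₂ • v) =
      a₁ ^ 2 * mink u u + 2 * a₁ * a₂ * mink u v + a₂ ^ 2 * mink v v := by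
  simp only [mink, Pi.add_apply, Pi.smul_apply, smul_eq_mul]
  ring

theorem hasDerivAt_sub_smul_sub_smul {E : Type*} [NormedAddCommGroup E] [NormedSpace ℝ E]
    {α t n₁ n₂ : ℝ → E} {κ₁ κ₂ : ℝ → ℝ} {ε : ℝ}
    {s : ℝ} (a₁ a₂ : ℝ) (hαt : HasDerivAt α (t s) s)
    (hn₁' : HasDerivAt n₁ ((-(ε * κ₁ s)) • t s) s)
    (hn₂' : HasDerivAt n₂ ((-(ε * κ₂ s)) • t s) s) :
    HasDerivAt (fun s => α s - a₁ • n₁ s - a₂ • n₂ s)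
      ((1 + ε * a₁ * κ₁ s + ε * a₂ * κ₂ s) • t s) s := by
  refine ((hαt.sub (hn₁'.const_smul a₁)).sub (hn₂'.const_smul a₂)).congr_deriv ?_
  module

theorem normal_development_line_implies_spherical_general
    (α t n₁ n₂ : ℝ → Fin 3 → ℝ) (κ₁ κ₂ : ℝ → ℝ) (ε ε₁ : ℝ)
    (hαt : ∀ s, HasDerivAt α (t s) s)
    (hn₁n₁ : ∀ s, mink (n₁ s) (n₁ s) = ε₁)
    (hn₂n₂ : ∀ s, mink (n₂ s) (n₂ s) = 1)
    (hn₁n₂ : ∀ s, mink (n₁ s) (n₂ s) = 0)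
    (hn₁' : ∀ s, HasDerivAt n₁ ((-(ε * κ₁ s)) • t s) s)
    (hn₂' : ∀ s, HasDerivAt n₂ ((-(ε * κ₂ s)) • t s) s)
    (a₁ a₂ : ℝ)
    (hline : ∀ s, 1 + ε * a₁ * κ₁ s + ε * a₂ * κ₂ s = 0) :
    (∀ s, α s - a₁ • n₁ s - a₂ • n₂ s = α 0 - a₁ • n₁ 0 - a₂ • n₂ 0) ∧
    (∀ s, mink (α s - (α 0 - a₁ • n₁ 0 - a₂ • n₂ 0))
        (α s - (α 0 - a₁ • n₁ 0 - a₂ • n₂ 0)) = ε₁ * a₁ ^ 2 + a₂ ^ 2) := by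
  have hP' (s : ℝ) : HasDerivAt (fun s => α s - a₁ • n₁ s - a₂ • n₂ s) 0 s := by
    simpa only [hline s, zero_smul] using
      hasDerivAt_sub_smul_sub_smul a₁ a₂ (hαt s) (hn₁' s) (hn₂' s)
  have hP (s : ℝ) : α s - a₁ • n₁ s - a₂ • n₂ s = α 0 - a₁ • n₁ 0 - a₂ • n₂ 0 :=
    is_const_of_deriv_eq_zero (fun x => (hP' x).differentiableAt) (fun x => (hP' x).deriv) s 0
  refine ⟨hP, fun s => ?_⟩
  have hαP : α s - (α 0 - a₁ • n₁ 0 - a₂ • n₂ 0) = a₁ • n₁ s + a₂ • n₂ s := by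
    rw [← hP s]
    abel
  rw [hαP, mink_smul_add_smul_self, hn₁n₁, hn₂n₂, hn₁n₂]
  ring

/-- If the normal development of a non-lightlike curve with a Bishop frame lies on the line
`1 + εa₁X + εa₂Y = 0` not through the origin, then `P = α − a₁n₁ − a₂n₂` is a fixed point
and the curve lies on the sphere `{x : (x−P,x−P) = ε₁a₁² + a₂²}`. -/
theorem normal_development_line_implies_spherical
    (α t n₁ n₂ : ℝ → Fin 3 → ℝ) (κ₁ κ₂ : ℝ → ℝ) (ε ε₁ : ℝ)
    (hε : ε = 1 ∨ ε = -1) (hε₁ : ε₁ = 1 ∨ ε₁ = -1)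
    (hαt : ∀ s, HasDerivAt α (t s) s)
    (htt : ∀ s, mink (t s) (t s) = ε)
    (hn₁n₁ : ∀ s, mink (n₁ s) (n₁ s) = ε₁)
    (hn₂n₂ : ∀ s, mink (n₂ s) (n₂ s) = 1)
    (htn₁ : ∀ s, mink (t s) (n₁ s) = 0)
    (htn₂ : ∀ s, mink (t s) (n₂ s) = 0)
    (hn₁n₂ : ∀ s, mink (n₁ s) (n₂ s) = 0)
    (ht' : ∀ s, HasDerivAt t ((ε₁ * κ₁ s) • n₁ s + κ₂ s • n₂ s) s)
    (hn₁' : ∀ s, HasDerivAt n₁ ((-(ε * κ₁ s)) • t s) s)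
    (hn₂' : ∀ s, HasDerivAt n₂ ((-(ε * κ₂ s)) • t s) s)
    (a₁ a₂ : ℝ)
    (hline : ∀ s, 1 + ε * a₁ * κ₁ s + ε * a₂ * κ₂ s = 0) :
    (∀ s, α s - a₁ • n₁ s - a₂ • n₂ s = α 0 - a₁ • n₁ 0 - a₂ • n₂ 0) ∧
    (∀ s, mink (α s - (α 0 - a₁ • n₁ 0 - a₂ • n₂ 0))
        (α s - (α 0 - a₁ • n₁ 0 - a₂ • n₂ 0)) = ε₁ * a₁ ^ 2 + a₂ ^ 2) :=
  normal_development_line_implies_spherical_general α t n₁ n₂ κ₁ κ₂ ε ε₁ hαt hn₁n₁ hn₂n₂ hn₁n₂ hn₁'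
    hn₂' a₁ a₂ hline
end
end

section
/- Let α : I → ℝ³ be a C² regular spacelike curve in Minkowski space with ε = (t,t) = 1 and Bishop frame {t, n₁, n₂} with (n₁,n₁) = −1, (n₂,n₂) = 1, nᵢ' = −κᵢ t, t' = −κ₁ n₁ + κ₂ n₂. If α lies on the light-cone C²(P) = {x : (x−P,x−P) = 0} with α(s) ≠ P, then there exist constants a₁, a₂ with 1 + a₁κ₁(s) + a₂κ₂(s) = 0 for all s and a₂ = ± a₁. -/
lemma mink_comm (x y : Fin 3 → ℝ) : mink x y = mink y x := by
  simp only [mink]; ring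

lemma mink_add_right (x y z : Fin 3 → ℝ) : mink x (y + z) = mink x y + mink x z := by
  simp only [mink, Pi.add_apply]; ring

lemma mink_smul_right (c : ℝ) (x y : Fin 3 → ℝ) : mink x (c • y) = c * mink x y := by
  simp only [mink, Pi.smul_apply, smul_eq_mul]; ring

/-- A Gram matrix of four vectors of `ℝ³` factors through `ℝ³`, so it has rank at most 3. -/
theorem det_gram_mink_eq_zero (v : Fin 4 → Fin 3 → ℝ) :
    (Matrix.of fun i j => mink (v i) (v j)).det = 0 := by
  set A : Matrix (Fin 4) (Fin 3) ℝ := Matrix.of fun i k => v i k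
  set B : Matrix (Fin 3) (Fin 4) ℝ := Matrix.of fun k j => ![1, 1, -1] k * v j k
  have hAB : (Matrix.of fun i j => mink (v i) (v j)) = A * B := by
    ext i j
    simp [A, B, Matrix.mul_apply, Fin.sum_univ_three, mink]
    ring
  by_contra h
  have hfull : (A * B).rank = 4 := by
    simpa using (A * B).rank_of_isUnit <| by
      rw [← hAB]; exact (Matrix.isUnit_iff_isUnit_det _).mpr (Ne.isUnit h)
  have hle : (A * B).rank ≤ 3 := (A.rank_mul_le_left B).trans A.rank_le_width
  omega

lemma mink_self_eq_of_frame {t n₁ n₂ : Fin 3 → ℝ} (htt : mink t t = 1)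
    (hn₁n₁ : mink n₁ n₁ = -1) (hn₂n₂ : mink n₂ n₂ = 1) (htn₁ : mink t n₁ = 0)
    (htn₂ : mink t n₂ = 0) (hn₁n₂ : mink n₁ n₂ = 0) (v : Fin 3 → ℝ) :
    mink v v = mink v t ^ 2 - mink v n₁ ^ 2 + mink v n₂ ^ 2 := by
  have hdet : (Matrix.of fun i j => mink (![t, n₁, n₂, v] i) (![t, n₁, n₂, v] j)).det =
      mink v n₂ ^ 2 - mink v n₁ ^ 2 + mink v t ^ 2 - mink v v := by
    simp [Matrix.det_succ_row_zero, Fin.sum_univ_succ, Fin.succAbove, mink_comm _ v,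
      mink_comm n₁ t, mink_comm n₂ t, mink_comm n₂ n₁, htt, hn₁n₁, hn₂n₂, htn₁, htn₂, hn₁n₂]
    ring
  linarith [det_gram_mink_eq_zero ![t, n₁, n₂, v]]

theorem HasDerivAt.mink {x y : ℝ → Fin 3 → ℝ} {x' y' : Fin 3 → ℝ} {s : ℝ}
    (hx : HasDerivAt x x' s) (hy : HasDerivAt y y' s) :
    HasDerivAt (fun u => mink (x u) (y u)) (mink x' (y s) + mink (x s) y') s := by
  have hxi := hasDerivAt_pi.mp hx
  have hyi := hasDerivAt_pi.mp hy
  refine ((((hxi 0).mul (hyi 0)).add ((hxi 1).mul (hyi 1))).sub ((hxi 2).mul (hyi 2))).congr_deriv ?_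
  simp only [_root_.mink]
  ring

lemma HasDerivAt.eq_zero_of_forall_eq {f : ℝ → ℝ} {f' c s : ℝ} (hf : HasDerivAt f f' s)
    (hc : ∀ u, f u = c) : f' = 0 :=
  hf.unique (by simpa only [funext hc] using hasDerivAt_const s c)

section Curve

variable {V t : ℝ → Fin 3 → ℝ} (hV : ∀ s, HasDerivAt V (t s) s)
include hV

lemma mink_tangent_eq_zero_of_mink_self_const {c : ℝ} (hc : ∀ s, mink (V s) (V s) = c)
    (s : ℝ) : mink (V s) (t s) = 0 := by
  have h := ((hV s).mink (hV s)).eq_zero_of_forall_eq hc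
  rw [mink_comm (t s)] at h
  linarith

lemma mink_normal_eq_const {n : ℝ → Fin 3 → ℝ} {κ : ℝ → ℝ}
    (hn : ∀ s, HasDerivAt n (κ s • t s) s) (hVt : ∀ s, mink (V s) (t s) = 0)
    (htn : ∀ s, mink (t s) (n s) = 0) (s : ℝ) : mink (V s) (n s) = mink (V 0) (n 0) := by
  have hd : ∀ u, HasDerivAt (fun u => mink (V u) (n u)) 0 u := fun u => by
    simpa [htn u, mink_smul_right, hVt u] using (hV u).mink (hn u)
  exact is_const_of_deriv_eq_zero (fun u => (hd u).differentiableAt) (fun u => (hd u).deriv) s 0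

end Curve

theorem lightcone_curve_normal_development_line_general
    (α t n₁ n₂ : ℝ → Fin 3 → ℝ) (κ₁ κ₂ : ℝ → ℝ)
    (hαt : ∀ s, HasDerivAt α (t s) s)
    (htt : ∀ s, mink (t s) (t s) = 1)
    (hn₁n₁ : ∀ s, mink (n₁ s) (n₁ s) = -1)
    (hn₂n₂ : ∀ s, mink (n₂ s) (n₂ s) = 1)
    (htn₁ : ∀ s, mink (t s) (n₁ s) = 0)
    (htn₂ : ∀ s, mink (t s) (n₂ s) = 0)
    (hn₁n₂ : ∀ s, mink (n₁ s) (n₂ s) = 0)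
    (ht' : ∀ s, HasDerivAt t ((-(κ₁ s)) • n₁ s + κ₂ s • n₂ s) s)
    (hn₁' : ∀ s, HasDerivAt n₁ ((-(κ₁ s)) • t s) s)
    (hn₂' : ∀ s, HasDerivAt n₂ ((-(κ₂ s)) • t s) s)
    (P : Fin 3 → ℝ)
    (hcone : ∀ s, mink (α s - P) (α s - P) = 0) :
    ∃ a₁ a₂ : ℝ, (∀ s, 1 + a₁ * κ₁ s + a₂ * κ₂ s = 0) ∧
      (a₂ = a₁ ∨ a₂ = -a₁) := by
  set V : ℝ → Fin 3 → ℝ := fun s => α s - P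
  have hV : ∀ s, HasDerivAt V (t s) s := fun s => (hαt s).sub_const P
  have hVt := mink_tangent_eq_zero_of_mink_self_const hV hcone
  have hc₁ := mink_normal_eq_const hV hn₁' hVt htn₁
  have hc₂ := mink_normal_eq_const hV hn₂' hVt htn₂
  refine ⟨-mink (V 0) (n₁ 0), mink (V 0) (n₂ 0), fun s => ?_, ?_⟩
  · have h := ((hV s).mink (ht' s)).eq_zero_of_forall_eq hVt
    rw [htt s, mink_add_right, mink_smul_right, mink_smul_right, hc₁ s, hc₂ s] at h
    linarith
  · have h := mink_self_eq_of_frame (htt 0) (hn₁n₁ 0) (hn₂n₂ 0) (htn₁ 0) (htn₂ 0) (hn₁n₂ 0) (V 0)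
    rw [hcone 0, hVt 0] at h
    exact sq_eq_sq_iff_eq_or_eq_neg.mp (by linear_combination -h)

/-- If a spacelike curve with a Bishop frame lies on the light-cone `C²(P)`, then its
normal development lies on a line `1 + a₁X + a₂Y = 0` not through the origin with
`a₂ = ±a₁`. -/
theorem lightcone_curve_normal_development_line
    (α t n₁ n₂ : ℝ → Fin 3 → ℝ) (κ₁ κ₂ : ℝ → ℝ)
    (hαt : ∀ s, HasDerivAt α (t s) s)
    (htt : ∀ s, mink (t s) (t s) = 1)
    (hn₁n₁ : ∀ s, mink (n₁ s) (n₁ s) = -1)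
    (hn₂n₂ : ∀ s, mink (n₂ s) (n₂ s) = 1)
    (htn₁ : ∀ s, mink (t s) (n₁ s) = 0)
    (htn₂ : ∀ s, mink (t s) (n₂ s) = 0)
    (hn₁n₂ : ∀ s, mink (n₁ s) (n₂ s) = 0)
    (ht' : ∀ s, HasDerivAt t ((-(κ₁ s)) • n₁ s + κ₂ s • n₂ s) s)
    (hn₁' : ∀ s, HasDerivAt n₁ ((-(κ₁ s)) • t s) s)
    (hn₂' : ∀ s, HasDerivAt n₂ ((-(κ₂ s)) • t s) s)
    (P : Fin 3 → ℝ)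
    (hne : ∀ s, α s ≠ P)
    (hcone : ∀ s, mink (α s - P) (α s - P) = 0) :
    ∃ a₁ a₂ : ℝ, (∀ s, 1 + a₁ * κ₁ s + a₂ * κ₂ s = 0) ∧
      (a₂ = a₁ ∨ a₂ = -a₁) :=
  lightcone_curve_normal_development_line_general α t n₁ n₂ κ₁ κ₂ hαt htt hn₁n₁ hn₂n₂ htn₁ htn₂
    hn₁n₂ ht' hn₁' hn₂' P hcone
end

section
/- Let α : I → ℝ³ be a spacelike curve with Bishop frame as above ((t,t)=1, (n₁,n₁)=−1, (n₂,n₂)=1). If 1 + a₁κ₁(s) ± a₁κ₂(s) = 0 for all s and some constant a₁, then P = α − a₁n₁ ∓ a₁n₂ is a fixed point and α lies on the light-cone C²(P), i.e., (α(s)−P, α(s)−P) = 0 for all s. -/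
noncomputable section

/-! Differentiating `P = α − a₁n₁ ∓ a₁n₂` with the Bishop equations gives
`P' = (1 + a₁κ₁ ± a₁κ₂) t = 0`, so `P` is constant. Then `α − P = a₁n₁ ± a₁n₂` and, `n₁`, `n₂`
being orthonormal of opposite causal character, its Minkowski square is `−a₁² + a₁² = 0`. -/

theorem mink_smul_add_smul_self_s10 (a b : ℝ) (x y : Fin 3 → ℝ) :
    mink (a • x + b • y) (a • x + b • y) =
      a ^ 2 * mink x x + 2 * a * b * mink x y + b ^ 2 * mink y y := by
  simp only [mink, Pi.add_apply, Pi.smul_apply, smul_eq_mul]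
  ring

theorem HasDerivAt.sub_smul_sub_smul {E : Type*} [NormedAddCommGroup E]
    [NormedSpace ℝ E] {α n₁ n₂ : ℝ → E} {v : E} {k₁ k₂ s : ℝ}
    (hα : HasDerivAt α v s) (hn₁ : HasDerivAt n₁ (-k₁ • v) s)
    (hn₂ : HasDerivAt n₂ (-k₂ • v) s) (a b : ℝ) :
    HasDerivAt (fun s => α s - a • n₁ s - b • n₂ s) ((1 + a * k₁ + b * k₂) • v) s := by
  refine ((hα.sub (hn₁.const_smul a)).sub (hn₂.const_smul b)).congr_deriv ?_
  module

theorem normal_development_line_implies_lightcone_general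
    (α t n₁ n₂ : ℝ → Fin 3 → ℝ) (κ₁ κ₂ : ℝ → ℝ)
    (hαt : ∀ s, HasDerivAt α (t s) s)
    (hn₁n₁ : ∀ s, mink (n₁ s) (n₁ s) = -1)
    (hn₂n₂ : ∀ s, mink (n₂ s) (n₂ s) = 1)
    (hn₁n₂ : ∀ s, mink (n₁ s) (n₂ s) = 0)
    (hn₁' : ∀ s, HasDerivAt n₁ ((-(κ₁ s)) • t s) s)
    (hn₂' : ∀ s, HasDerivAt n₂ ((-(κ₂ s)) • t s) s)
    (a₁ σ : ℝ) (hσ : σ = 1 ∨ σ = -1)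
    (hline : ∀ s, 1 + a₁ * κ₁ s + σ * a₁ * κ₂ s = 0) :
    (∀ s, α s - a₁ • n₁ s - (σ * a₁) • n₂ s = α 0 - a₁ • n₁ 0 - (σ * a₁) • n₂ 0) ∧
    (∀ s, mink (α s - (α 0 - a₁ • n₁ 0 - (σ * a₁) • n₂ 0))
        (α s - (α 0 - a₁ • n₁ 0 - (σ * a₁) • n₂ 0)) = 0) := by
  set P : ℝ → Fin 3 → ℝ := fun s => α s - a₁ • n₁ s - (σ * a₁) • n₂ s with hP
  have hP' : ∀ s, HasDerivAt P 0 s := fun s => by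
    simpa only [hline s, zero_smul] using
      (hαt s).sub_smul_sub_smul (hn₁' s) (hn₂' s) a₁ (σ * a₁)
  have hconst : ∀ s, P s = P 0 := fun s =>
    is_const_of_deriv_eq_zero (fun y => (hP' y).differentiableAt) (fun y => (hP' y).deriv) s 0
  refine ⟨hconst, fun s => ?_⟩
  have hαP : α s - P 0 = a₁ • n₁ s + (σ * a₁) • n₂ s := by
    rw [← hconst s]
    simp only [hP]
    abel
  rw [hαP, mink_smul_add_smul_self_s10, hn₁n₁, hn₂n₂, hn₁n₂]
  rcases hσ with rfl | rfl <;> ring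

/-- If the normal development of a spacelike curve with a Bishop frame satisfies
`1 + a₁κ₁ ± a₁κ₂ = 0`, then `P = α − a₁n₁ ∓ a₁n₂` is a fixed point and the curve lies on
the light-cone `C²(P)`. -/
theorem normal_development_line_implies_lightcone
    (α t n₁ n₂ : ℝ → Fin 3 → ℝ) (κ₁ κ₂ : ℝ → ℝ)
    (hαt : ∀ s, HasDerivAt α (t s) s)
    (htt : ∀ s, mink (t s) (t s) = 1)
    (hn₁n₁ : ∀ s, mink (n₁ s) (n₁ s) = -1)
    (hn₂n₂ : ∀ s, mink (n₂ s) (n₂ s) = 1)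
    (htn₁ : ∀ s, mink (t s) (n₁ s) = 0)
    (htn₂ : ∀ s, mink (t s) (n₂ s) = 0)
    (hn₁n₂ : ∀ s, mink (n₁ s) (n₂ s) = 0)
    (ht' : ∀ s, HasDerivAt t ((-(κ₁ s)) • n₁ s + κ₂ s • n₂ s) s)
    (hn₁' : ∀ s, HasDerivAt n₁ ((-(κ₁ s)) • t s) s)
    (hn₂' : ∀ s, HasDerivAt n₂ ((-(κ₂ s)) • t s) s)
    (a₁ σ : ℝ) (hσ : σ = 1 ∨ σ = -1)
    (hline : ∀ s, 1 + a₁ * κ₁ s + σ * a₁ * κ₂ s = 0) :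
    (∀ s, α s - a₁ • n₁ s - (σ * a₁) • n₂ s = α 0 - a₁ • n₁ 0 - (σ * a₁) • n₂ 0) ∧
    (∀ s, mink (α s - (α 0 - a₁ • n₁ 0 - (σ * a₁) • n₂ 0))
        (α s - (α 0 - a₁ • n₁ 0 - (σ * a₁) • n₂ 0)) = 0) :=
  normal_development_line_implies_lightcone_general α t n₁ n₂ κ₁ κ₂ hαt hn₁n₁ hn₂n₂ hn₁n₂ hn₁' hn₂'
    a₁ σ hσ hline
end
end
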